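/- arXiv:1803.11275 — 3 statements merged into one kernel-verified Lean document; each statement's English description precedes it below -/
import Mathlib

section
/- Let G be a simple graph on n vertices with walk matrix W, and let W̄ be the walk matrix of the complement Ḡ (with the same vertex ordering). For every k with 1 ≤ k ≤ n, let W_k and W̄_k denote the k×k leading principal (top-left) submatrices of W and W̄ respectively. Then det(W̄_k) = (−1)^{k(k−1)/2} · det(W_k). -/
/-!
Over any commutative ring, if `D` maps each Krylov space `span {Aⁱ e | i < m + 1}` into
itself, then `(c • A + D)ʲ e ≡ cʲ Aʲ e` modulo `span {Aⁱ e | i < j}`. Hence the Krylov matrix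
of `c • A + D` is the Krylov matrix of `A` times an upper triangular matrix with diagonal `cʲ`,
for any number `k` of columns, and this factorization survives any choice of `k` rows.
For the complement, `Ā = -A + (J - I)`, and `J - I` preserves the Krylov spaces of `(A, e)`
because `J x ∈ ℤ e`; so `det W̄ₖ = ∏_{j<k} (-1)ʲ · det Wₖ`.
-/

open Matrix

open scoped Classical in
/-- The 0/1 adjacency matrix of a simple graph, over the integers. -/
noncomputable def adjMat {V : Type*} [Fintype V] (G : SimpleGraph V) : Matrix V V ℤ :=
  Matrix.of fun u v => if G.Adj u v then (1 : ℤ) else 0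

/-- The walk matrix of a simple graph on `Fin n`: its `j`-th column is ``A^j e``
where `e` is the all-ones vector. -/
noncomputable def walkMat {n : ℕ} (G : SimpleGraph (Fin n)) : Matrix (Fin n) (Fin n) ℤ :=
  Matrix.of fun i j => ((adjMat G ^ (j : ℕ)) *ᵥ fun _ => (1 : ℤ)) i

/-- `G ∪ w`: adjoin a new vertex (labelled `0`) adjacent to no vertex of `G`;
the original vertex `i` of `G` becomes `i.succ`. -/
def unionVertex {n : ℕ} (G : SimpleGraph (Fin n)) : SimpleGraph (Fin (n + 1)) where
  Adj u v := ∃ i j : Fin n, u = i.succ ∧ v = j.succ ∧ G.Adj i j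
  symm := by
    constructor
    rintro u v ⟨i, j, hu, hv, h⟩
    exact ⟨j, i, hv, hu, h.symm⟩
  loopless := by
    constructor
    rintro u ⟨i, j, rfl, hv, h⟩
    obtain rfl : i = j := Fin.succ_inj.mp hv
    exact G.loopless.irrefl i h

/-- `G ∨ w`: adjoin a new vertex (labelled `0`) adjacent to every vertex of `G`;
the original vertex `i` of `G` becomes `i.succ`. -/
def joinVertex {n : ℕ} (G : SimpleGraph (Fin n)) : SimpleGraph (Fin (n + 1)) where
  Adj u v := (u = 0 ∧ v ≠ 0) ∨ (v = 0 ∧ u ≠ 0) ∨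
    ∃ i j : Fin n, u = i.succ ∧ v = j.succ ∧ G.Adj i j
  symm := by
    constructor
    rintro u v (⟨h1, h2⟩ | ⟨h1, h2⟩ | ⟨i, j, hu, hv, h⟩)
    · exact Or.inr (Or.inl ⟨h1, h2⟩)
    · exact Or.inl ⟨h1, h2⟩
    · exact Or.inr (Or.inr ⟨j, i, hv, hu, h.symm⟩)
  loopless := by
    constructor
    rintro u (⟨h1, h2⟩ | ⟨h1, h2⟩ | ⟨i, j, rfl, hv, h⟩)
    · exact h2 h1
    · exact h2 h1
    · obtain rfl : i = j := Fin.succ_inj.mp hv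
      exact G.loopless.irrefl i h

/-- The sequence `G₀, G₁, G₂, …` where `Gᵢ = G_{i-1} ∪ wᵢ` for odd `i` and
`Gᵢ = G_{i-1} ∨ wᵢ` for even `i ≥ 2`. -/
def seqGraph {n0 : ℕ} (G0 : SimpleGraph (Fin n0)) : (i : ℕ) → SimpleGraph (Fin (n0 + i))
  | 0 => G0
  | (i + 1) => if (i + 1) % 2 = 1 then unionVertex (seqGraph G0 i) else joinVertex (seqGraph G0 i)

/-- A graph is determined by its generalized spectrum. -/
def IsDGS {n : ℕ} (G : SimpleGraph (Fin n)) : Prop :=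
  ∀ H : SimpleGraph (Fin n),
    (adjMat H).charpoly = (adjMat G).charpoly →
    (adjMat Hᶜ).charpoly = (adjMat Gᶜ).charpoly →
    Nonempty (H ≃g G)

open Submodule

theorem exists_eq_mul_blockTriangular_of_sub_smul_mem_span {ι κ R : Type*} [Fintype κ]
    [LinearOrder κ] [CommRing R] {v w : κ → ι → R} (c : κ → R)
    (h : ∀ j, w j - c j • v j ∈ span R (v '' Set.Iio j)) :
    ∃ U : Matrix κ κ R, U.BlockTriangular id ∧ (∀ j, U j j = c j) ∧
      (of w)ᵀ = (of v)ᵀ * U := by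
  choose l hl hlv using fun j => (Finsupp.mem_span_image_iff_linearCombination R).1 (h j)
  have hl0 : ∀ i j, ¬ i < j → l j i = 0 := fun i j hij =>
    (Finsupp.mem_supported' R _).1 (hl j) i hij
  refine ⟨of (fun i j => l j i) + diagonal c, fun i j hij => ?_, fun j => ?_, ?_⟩
  · have hji : j < i := hij
    simp [hl0 i j hji.not_gt, diagonal_apply_ne c hji.ne']
  · simp [hl0 j j (lt_irrefl j)]
  · ext i j
    have hcol := congr_fun (hlv j) i
    rw [Finsupp.linearCombination_apply, Finsupp.sum_fintype _ _ (by simp)] at hcol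
    simp only [Finset.sum_apply, Pi.smul_apply, smul_eq_mul, Pi.sub_apply] at hcol
    rw [Matrix.mul_add, Matrix.add_apply, mul_diagonal, mul_apply]
    simp only [transpose_apply, of_apply, mul_comm (v _ i), hcol]
    ring

section Krylov

variable {ι R : Type*} [Fintype ι] [DecidableEq ι] [CommRing R]

def krylov (A : Matrix ι ι R) (e : ι → R) (m : ℕ) : Submodule R (ι → R) :=
  span R ((fun i => (A ^ i) *ᵥ e) '' Set.Iio m)

def krylovMat (A : Matrix ι ι R) (e : ι → R) (k : ℕ) : Matrix ι (Fin k) R :=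
  (of fun j : Fin k => A ^ (j : ℕ) *ᵥ e)ᵀ

variable {A : Matrix ι ι R} {e : ι → R}

theorem pow_mulVec_mem_krylov {i m : ℕ} (h : i < m) : A ^ i *ᵥ e ∈ krylov A e m :=
  subset_span ⟨i, h, rfl⟩

theorem krylov_mono {m m' : ℕ} (h : m ≤ m') : krylov A e m ≤ krylov A e m' :=
  span_mono (Set.image_mono (Set.Iio_subset_Iio h))

theorem mulVec_mem_krylov_succ {x : ι → R} {m : ℕ} (hx : x ∈ krylov A e m) :
    A *ᵥ x ∈ krylov A e (m + 1) := by
  suffices krylov A e m ≤ (krylov A e (m + 1)).comap A.mulVecLin from this hx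
  refine span_le.2 ?_
  rintro _ ⟨i, hi, rfl⟩
  simpa [mulVec_mulVec, ← pow_succ'] using
    pow_mulVec_mem_krylov (A := A) (e := e) (Nat.succ_lt_succ hi)

theorem smul_add_pow_mulVec_sub_mem_krylov (c : R) {D : Matrix ι ι R}
    (hD : ∀ m, ∀ x ∈ krylov A e (m + 1), D *ᵥ x ∈ krylov A e (m + 1)) (j : ℕ) :
    (c • A + D) ^ j *ᵥ e - c ^ j • (A ^ j *ᵥ e) ∈ krylov A e j := by
  induction j with
  | zero => simp
  | succ j ih =>
    set y := (c • A + D) ^ j *ᵥ e - c ^ j • (A ^ j *ᵥ e)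
    have hstep : (c • A + D) ^ (j + 1) *ᵥ e - c ^ (j + 1) • (A ^ (j + 1) *ᵥ e)
        = c • (A *ᵥ y) + D *ᵥ y + c ^ j • (D *ᵥ (A ^ j *ᵥ e)) := by
      simp only [y, pow_succ', ← mulVec_mulVec, add_mulVec, smul_mulVec, mulVec_smul,
        mulVec_sub]
      module
    rw [hstep]
    exact add_mem (add_mem (smul_mem _ _ (mulVec_mem_krylov_succ ih))
      (hD _ _ (krylov_mono j.le_succ ih)))
      (smul_mem _ _ (hD _ _ (pow_mulVec_mem_krylov j.lt_succ_self)))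

theorem krylov_eq_span_image_fin {k : ℕ} (j : Fin k) :
    krylov A e j = span R ((fun j : Fin k => A ^ (j : ℕ) *ᵥ e) '' Set.Iio j) := by
  rw [krylov]
  congr 1
  ext x
  constructor
  · rintro ⟨i, hi, rfl⟩
    exact ⟨⟨i, hi.trans j.isLt⟩, hi, rfl⟩
  · rintro ⟨i, hi, rfl⟩
    exact ⟨i, hi, rfl⟩

theorem det_submatrix_krylovMat_smul_add (c : R) {D : Matrix ι ι R}
    (hD : ∀ m, ∀ x ∈ krylov A e (m + 1), D *ᵥ x ∈ krylov A e (m + 1))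
    {k : ℕ} (r : Fin k → ι) :
    ((krylovMat (c • A + D) e k).submatrix r id).det =
      c ^ (k * (k - 1) / 2) * ((krylovMat A e k).submatrix r id).det := by
  obtain ⟨U, hU, hUdiag, hfac⟩ := exists_eq_mul_blockTriangular_of_sub_smul_mem_span
    (v := fun j : Fin k => A ^ (j : ℕ) *ᵥ e) (fun j => c ^ (j : ℕ)) fun j => by
      rw [← krylov_eq_span_image_fin]
      exact smul_add_pow_mulVec_sub_mem_krylov c hD j
  have hdetU : U.det = c ^ (k * (k - 1) / 2) := by
    rw [det_of_isUpperTriangular hU, Finset.prod_congr rfl fun j _ => hUdiag j,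
      Finset.prod_pow_eq_pow_sum, Fin.sum_univ_eq_sum_range (fun j => j) k, Finset.sum_range_id]
  rw [show krylovMat (c • A + D) e k = krylovMat A e k * U from hfac,
    submatrix_mul _ _ _ id _ Function.bijective_id, submatrix_id_id, det_mul, hdetU, mul_comm]

theorem allOnes_sub_one_mulVec_mem_krylov {m : ℕ} {x : ι → R} (hx : x ∈ krylov A 1 (m + 1)) :
    (of (fun _ _ => 1) - 1 : Matrix ι ι R) *ᵥ x ∈ krylov A 1 (m + 1) := by
  have hJ : of (fun _ _ => 1) *ᵥ x = (∑ i, x i) • (A ^ 0 *ᵥ 1) := by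
    ext; simp [mulVec, dotProduct]
  rw [sub_mulVec, one_mulVec, hJ]
  exact sub_mem (smul_mem _ _ (pow_mulVec_mem_krylov m.succ_pos)) hx

end Krylov

theorem adjMat_compl {V : Type*} [Fintype V] [DecidableEq V] (G : SimpleGraph V) :
    adjMat Gᶜ = (-1 : ℤ) • adjMat G + (of (fun _ _ => 1) - 1) := by
  ext u v
  by_cases huv : u = v
  · subst huv; simp [adjMat]
  · by_cases h : G.Adj u v <;> simp [adjMat, huv, h]

theorem walkMat_submatrix_castLE {n k : ℕ} (G : SimpleGraph (Fin n)) (hkn : k ≤ n) :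
    (walkMat G).submatrix (Fin.castLE hkn) (Fin.castLE hkn) =
      (krylovMat (adjMat G) 1 k).submatrix (Fin.castLE hkn) id :=
  rfl

theorem det_walkMat_compl_leading_principal_general {n : ℕ} (G : SimpleGraph (Fin n))
    (k : ℕ) (hkn : k ≤ n) :
    ((walkMat Gᶜ).submatrix (Fin.castLE hkn) (Fin.castLE hkn)).det =
      (-1 : ℤ) ^ (k * (k - 1) / 2) *
        ((walkMat G).submatrix (Fin.castLE hkn) (Fin.castLE hkn)).det := by
  rw [walkMat_submatrix_castLE, walkMat_submatrix_castLE, adjMat_compl]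
  exact det_submatrix_krylovMat_smul_add (-1) (fun _ _ => allOnes_sub_one_mulVec_mem_krylov) _

/-- the leading principal `k × k` submatrices of the walk matrices of `G`
and its complement satisfy det(W̄ₖ) = (−1)^{k(k−1)/2} · det(Wₖ). -/
theorem det_walkMat_compl_leading_principal {n : ℕ} (G : SimpleGraph (Fin n))
    (k : ℕ) (hk1 : 1 ≤ k) (hkn : k ≤ n) :
    ((walkMat Gᶜ).submatrix (Fin.castLE hkn) (Fin.castLE hkn)).det =
      (-1 : ℤ) ^ (k * (k - 1) / 2) *
        ((walkMat G).submatrix (Fin.castLE hkn) (Fin.castLE hkn)).det :=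
  det_walkMat_compl_leading_principal_general G k hkn
end

section
/- Let G be a simple graph on n vertices with adjacency matrix A and walk matrix W, and let G ∪ w be the graph on n+1 vertices obtained from G by adding a new isolated vertex w. If the vertices of G ∪ w are ordered with w first, followed by the vertices of G in their original order, then det(W(G ∪ w)) = det(A) · det(W). -/
open Matrix

/-!
The new vertex `w` is isolated, so `A(G ∪ w)` is `A` bordered by a zero row and column. Hence
`A(G ∪ w)^j e = (δ_{j0}, A^j e)`: the row of `W(G ∪ w)` indexed by `w` is `(1, 0, …, 0)`, and the
remaining minor has columns `A^{j+1} e`, i.e. it is `A · W`. Laplace expansion along that row gives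
`det W(G ∪ w) = det (A · W)`.
-/

namespace Matrix

variable {R : Type*} {n : ℕ}

theorem det_eq_det_submatrix_succ_of_row_zero [CommRing R]
    (M : Matrix (Fin (n + 1)) (Fin (n + 1)) R) (hM : M 0 = Pi.single 0 1) :
    M.det = (M.submatrix Fin.succ Fin.succ).det := by
  rw [det_succ_row_zero, Fin.sum_univ_succ, hM]
  simp [Fin.succ_ne_zero]

theorem mulVec_cons_of_row_col_zero [NonUnitalNonAssocSemiring R]
    {M : Matrix (Fin (n + 1)) (Fin (n + 1)) R} (hrow : M 0 = 0) (hcol : ∀ i : Fin n, M i.succ 0 = 0)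
    (a : R) (x : Fin n → R) :
    M *ᵥ Fin.cons a x = Fin.cons 0 (M.submatrix Fin.succ Fin.succ *ᵥ x) := by
  ext i
  cases i using Fin.cases with
  | zero => simp [mulVec, hrow]
  | succ i => simp [mulVec, dotProduct, Fin.sum_univ_succ, hcol]

theorem pow_succ_mulVec_cons_of_row_col_zero [Semiring R]
    {M : Matrix (Fin (n + 1)) (Fin (n + 1)) R} (hrow : M 0 = 0) (hcol : ∀ i : Fin n, M i.succ 0 = 0)
    (j : ℕ) (a : R) (x : Fin n → R) :
    M ^ (j + 1) *ᵥ Fin.cons a x = Fin.cons 0 (M.submatrix Fin.succ Fin.succ ^ (j + 1) *ᵥ x) := by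
  induction j with
  | zero => simpa using mulVec_cons_of_row_col_zero hrow hcol a x
  | succ j ih =>
    rw [pow_succ', ← mulVec_mulVec, ih, mulVec_cons_of_row_col_zero hrow hcol, mulVec_mulVec,
      ← pow_succ']

end Matrix

section UnionVertex

variable {n : ℕ} (G : SimpleGraph (Fin n))

theorem adjMat_unionVertex_zero :
    adjMat (unionVertex G) 0 = 0 := by
  ext v
  simp [adjMat, unionVertex, (Fin.succ_ne_zero _).symm]

theorem adjMat_unionVertex_succ_zero (i : Fin n) :
    adjMat (unionVertex G) i.succ 0 = 0 := by
  simp [adjMat, unionVertex, (Fin.succ_ne_zero _).symm]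

theorem adjMat_unionVertex_submatrix_succ :
    (adjMat (unionVertex G)).submatrix Fin.succ Fin.succ = adjMat G := by
  ext i j
  simp only [adjMat, submatrix_apply, of_apply]
  congr 1
  simp [unionVertex]

theorem adjMat_unionVertex_pow_succ_mulVec_one (j : ℕ) :
    adjMat (unionVertex G) ^ (j + 1) *ᵥ (fun _ => 1) =
      Fin.cons 0 (adjMat G ^ (j + 1) *ᵥ fun _ => 1) := by
  rw [← Fin.cons_self_tail (fun _ => 1), pow_succ_mulVec_cons_of_row_col_zero
    (adjMat_unionVertex_zero G) (adjMat_unionVertex_succ_zero G), adjMat_unionVertex_submatrix_succ]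
  rfl

theorem walkMat_unionVertex_zero :
    walkMat (unionVertex G) 0 = Pi.single 0 1 := by
  ext j
  cases j using Fin.cases with
  | zero => simp [walkMat]
  | succ j => simp [walkMat, adjMat_unionVertex_pow_succ_mulVec_one, Fin.succ_ne_zero]

theorem walkMat_unionVertex_submatrix_succ :
    (walkMat (unionVertex G)).submatrix Fin.succ Fin.succ = adjMat G * walkMat G := by
  ext i j
  simp only [walkMat, submatrix_apply, of_apply, Fin.val_succ]
  rw [adjMat_unionVertex_pow_succ_mulVec_one, Fin.cons_succ, pow_succ', ← mulVec_mulVec]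
  rfl

end UnionVertex

/-- with the new isolated vertex `w` listed first,
det(W(G ∪ w)) = det(A) · det(W). -/
theorem det_walkMat_unionVertex {n : ℕ} (G : SimpleGraph (Fin n)) :
    (walkMat (unionVertex G)).det = (adjMat G).det * (walkMat G).det := by
  rw [det_eq_det_submatrix_succ_of_row_zero _ (walkMat_unionVertex_zero G),
    walkMat_unionVertex_submatrix_succ, det_mul]
end

section
/- Let H be a simple graph with adjacency matrix A(H), and let K = (H ∪ w) ∨ u be the graph obtained from H by first adding an isolated vertex w and then adding a further vertex u adjacent to all vertices of H ∪ w. Then det(A(K)) = − det(A(H)). -/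
open Matrix

/-!
In `K = (H ∪ w) ∨ u` the vertex `w` has `u` as its only neighbour, so the row and the column
of `w` in `A(K)` are both the unit vector at `u`. Laplace expansion along that row and then along
that column deletes `u` and `w` and leaves `A(H)`, with the sign `-1` of the `(w, u)` cofactor.
-/

theorem Matrix.det_eq_neg_det_submatrix_succ_succ {R : Type*} [CommRing R] {n : ℕ}
    (M : Matrix (Fin (n + 2)) (Fin (n + 2)) R)
    (hrow : M 1 = Pi.single 0 1) (hcol : Mᵀ 1 = Pi.single 0 1) :
    M.det = -(M.submatrix (Fin.succ ∘ Fin.succ) (Fin.succ ∘ Fin.succ)).det := by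
  have hrow' := congr_fun hrow
  have hcol' := congr_fun hcol
  simp only [transpose_apply] at hcol'
  rw [det_succ_row M 1, Fin.sum_univ_succ, Finset.sum_eq_zero fun j _ => by
    simp [hrow', Fin.succ_ne_zero]]
  rw [det_succ_column_zero, Fin.sum_univ_succ, Finset.sum_eq_zero fun i _ => by
    simp [hcol']]
  simp [hrow', hcol', Function.comp_def]

theorem adjMat_comap {V W : Type*} [Fintype V] [Fintype W] (G : SimpleGraph W) (f : V → W) :
    adjMat (G.comap f) = (adjMat G).submatrix f f :=
  rfl

theorem adjMat_transpose {V : Type*} [Fintype V] (G : SimpleGraph V) :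
    (adjMat G)ᵀ = adjMat G := by
  classical
  ext u v
  exact if_congr (G.adj_comm v u) rfl rfl

section VertexExtensions

variable {n : ℕ} (G : SimpleGraph (Fin n))

@[simp]
theorem unionVertex_adj_succ_succ (i j : Fin n) :
    (unionVertex G).Adj i.succ j.succ ↔ G.Adj i j := by
  simp [unionVertex]

@[simp]
theorem unionVertex_not_adj_zero (v : Fin (n + 1)) : ¬ (unionVertex G).Adj 0 v := by
  rintro ⟨i, -, h, -, -⟩
  exact Fin.succ_ne_zero i h.symm

@[simp]
theorem joinVertex_adj_succ_succ (i j : Fin n) :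
    (joinVertex G).Adj i.succ j.succ ↔ G.Adj i j := by
  simp [joinVertex]

@[simp]
theorem joinVertex_adj_zero (v : Fin (n + 1)) : (joinVertex G).Adj 0 v ↔ v ≠ 0 := by
  refine ⟨?_, fun h => Or.inl ⟨rfl, h⟩⟩
  rintro (⟨-, h⟩ | ⟨rfl, h⟩ | ⟨i, -, h, -, -⟩)
  · exact h
  · exact absurd rfl h
  · exact absurd h.symm (Fin.succ_ne_zero i)

@[simp]
theorem joinVertex_comap_succ : (joinVertex G).comap Fin.succ = G := by
  ext; simp

@[simp]
theorem unionVertex_comap_succ : (unionVertex G).comap Fin.succ = G := by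
  ext; simp

theorem adjMat_joinVertex_unionVertex_one :
    adjMat (joinVertex (unionVertex G)) 1 = Pi.single 0 1 := by
  ext v
  rw [← Fin.succ_zero_eq_one]
  refine Fin.cases ?_ (fun j => ?_) v
  · rw [adjMat, of_apply, if_pos ((joinVertex _).adj_comm _ _ |>.mpr <|
      (joinVertex_adj_zero _ _).mpr (Fin.succ_ne_zero 0)), Pi.single_eq_same]
  · rw [adjMat, of_apply,
      if_neg ((joinVertex_adj_succ_succ _ 0 j).not.mpr (unionVertex_not_adj_zero G j)),
      Pi.single_eq_of_ne (Fin.succ_ne_zero j)]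

end VertexExtensions

/-- for `K = (H ∪ w) ∨ u`, det(A(K)) = − det(A(H)). -/
theorem det_adjMat_join_union {n : ℕ} (H : SimpleGraph (Fin n)) :
    (adjMat (joinVertex (unionVertex H))).det = - (adjMat H).det := by
  rw [Matrix.det_eq_neg_det_submatrix_succ_succ _ (adjMat_joinVertex_unionVertex_one H)
    (by rw [adjMat_transpose, adjMat_joinVertex_unionVertex_one]), ← adjMat_comap,
    ← SimpleGraph.comap_comap, joinVertex_comap_succ, unionVertex_comap_succ]
end
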